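/- Fix $m \in \mathbb{N}$ and let $W = (W_1,\ldots,W_d)$ be a standard $d$-dimensional Brownian motion on $[0,1]$. Then, almost surely, the Wiener monomials $\{W_\alpha\}_{|\alpha| \le m}$, viewed as real-valued functions on $[0,1]$, are linearly independent over $\mathbb{R}$: almost surely, for every family of real coefficients $(c_\alpha)_{|\alpha| \le m}$, if $\sum_{|\alpha| \le m} c_\alpha W_\alpha(t) = 0$ for all $t \in [0,1]$, then $c_\alpha = 0$ for every $\alpha$. -/

import Mathlib

/-!
Sample the path on the grid `t_l = l / (n + 1)`, where `n` is the number of monomials. The values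
`W_i(t_{l+1})` are partial sums of the increments, which are independent and atomless (Gaussian),
so the determinant of the matrix `(W_k(t_{j+1}))_{k,j}` is a polynomial `F` in the increments.
Monomials are linearly independent functions, so their matrix at suitable points is invertible;
inverting the partial sums turns these points into increments at which `F ≠ 0`. The zero set of a
nonzero polynomial is null for every product of atomless measures (induct on the variables: for
almost every value of the others, the polynomial in the first variable is nonzero and has finitely
many roots). Hence almost surely the matrix is invertible, and a vanishing combination of the
monomials has zero coefficients.
-/

open MeasureTheory ProbabilityTheory

/-- A standard `d`-dimensional Brownian motion on the probability space `(Ω, P)`: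
each coordinate starts at `0`, has almost surely continuous paths, Gaussian increments
`W i t - W i s ∼ N(0, t - s)`, and all increments over disjoint time intervals
(across all coordinates) are independent. -/
structure IsStdBrownianMotion {Ω : Type*} [MeasurableSpace Ω] (P : Measure Ω)
    {d : ℕ} (W : Fin d → ℝ → Ω → ℝ) : Prop where
  measurable : ∀ i t, Measurable (W i t)
  init : ∀ i, ∀ᵐ ω ∂P, W i 0 ω = 0
  cont : ∀ᵐ ω ∂P, ∀ i, Continuous fun t => W i t ω
  gaussian_incr : ∀ i, ∀ s t : ℝ, 0 ≤ s → s ≤ t →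
    P.map (fun ω => W i t ω - W i s ω) = gaussianReal 0 (Real.toNNReal (t - s))
  indep_incr : ∀ (n : ℕ) (t : ℕ → ℝ), Monotone t → (∀ j, 0 ≤ t j) →
    iIndepFun
      (fun p : Fin d × Fin n => fun ω =>
        W p.1 (t ((p.2 : ℕ) + 1)) ω - W p.1 (t (p.2 : ℕ)) ω) P

theorem Fin.partialSum_sub_eq {G : Type*} [AddCommGroup G] {n : ℕ} (g : Fin (n + 1) → G)
    (j : Fin (n + 1)) : Fin.partialSum (fun l => g l.succ - g l.castSucc) j = g j - g 0 := by
  have := congrFun (Fin.partialSum_left_neg g) j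
  simp only [Pi.vadd_apply, vadd_eq_add, neg_add_eq_sub] at this
  rw [eq_sub_iff_add_eq', this]

theorem map_partialSum {M N F : Type*} [AddMonoid M] [AddMonoid N] [FunLike F M N]
    [AddMonoidHomClass F M N] (φ : F) {n : ℕ} (f : Fin n → M) (j : Fin (n + 1)) :
    φ (Fin.partialSum f j) = Fin.partialSum (φ ∘ f) j := by
  simp [Fin.partialSum, map_list_sum, List.map_take, List.map_ofFn]

def monomialMatrix {ι σ R : Type*} [Fintype σ] [CommSemiring R] (κ : ι → σ → ℕ)
    (z : ι → σ → R) : Matrix ι ι R :=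
  Matrix.of fun r j => ∏ i, z j i ^ κ r i

theorem RingHom.map_det_monomialMatrix {ι σ R S : Type*} [Fintype ι] [DecidableEq ι]
    [Fintype σ] [CommRing R] [CommRing S] (φ : R →+* S) (κ : ι → σ → ℕ) (z : ι → σ → R) :
    φ (monomialMatrix κ z).det = (monomialMatrix κ fun j i => φ (z j i)).det := by
  rw [RingHom.map_det]
  congr 1
  ext r j
  simp [monomialMatrix]

theorem linearIndependent_monomial_functions {ι σ K : Type*} [Fintype σ] [Field K] [Infinite K]
    {κ : ι → σ → ℕ} (hκ : Function.Injective κ) :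
    LinearIndependent K fun r (x : σ → K) => ∏ i, x i ^ κ r i := by
  classical
  let ev : MvPolynomial σ K →ₗ[K] (σ → K) → K :=
    LinearMap.pi fun x => (MvPolynomial.aeval x).toLinearMap
  have hev : LinearMap.ker ev = ⊥ :=
    LinearMap.ker_eq_bot.mpr fun p q h => MvPolynomial.funext fun x => congrFun h x
  have hmon : (fun r (x : σ → K) => ∏ i, x i ^ κ r i) =
      ev ∘ MvPolynomial.basisMonomials σ K ∘ Finsupp.equivFunOnFinite.symm ∘ κ := by
    ext r x
    simp [ev, MvPolynomial.aeval_monomial, Finsupp.prod_fintype]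
  rw [hmon]
  exact ((MvPolynomial.basisMonomials σ K).linearIndependent.comp _
    (Finsupp.equivFunOnFinite.symm.injective.comp hκ)).map' ev hev

theorem exists_det_ne_zero_of_linearIndependent_fin {X K : Type*} [Field K] :
    ∀ {n : ℕ} {f : Fin n → X → K}, LinearIndependent K f →
      ∃ z : Fin n → X, (Matrix.of fun r j => f r (z j)).det ≠ 0
  | 0, _, _ => ⟨Fin.elim0, by simp⟩
  | n + 1, f, hf => by
    obtain ⟨z, hz⟩ := exists_det_ne_zero_of_linearIndependent_fin
      (hf.comp Fin.castSucc (Fin.castSucc_injective n))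
    by_contra! h
    -- Expanding along a last column `x` shows that the cofactors `c` annihilate the family.
    let c : Fin (n + 1) → K := fun r =>
      (-1) ^ (r + n : ℕ) * (Matrix.of fun r' j => f (r.succAbove r') (z j)).det
    have hc : ∑ r, c r • f r = 0 := funext fun x => by
      have hx := h (Fin.snoc z x)
      rw [Matrix.det_succ_column _ (Fin.last n)] at hx
      simp only [Finset.sum_apply, Pi.smul_apply, smul_eq_mul, Pi.zero_apply, ← hx]
      refine Finset.sum_congr rfl fun r _ => ?_
      simp only [c, Fin.val_last, Matrix.of_apply, Fin.snoc_last, Matrix.submatrix,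
        Fin.succAbove_last, Fin.snoc_castSucc]
      ring
    have hlast := Fintype.linearIndependent_iff.mp hf c hc (Fin.last n)
    simp only [c, Fin.val_last, Even.add_self, Even.neg_pow, one_pow, Fin.succAbove_last,
      one_mul] at hlast
    exact hz hlast

theorem exists_det_ne_zero_of_linearIndependent {ι X K : Type*} [Fintype ι] [DecidableEq ι]
    [Field K] {f : ι → X → K} (hf : LinearIndependent K f) :
    ∃ z : ι → X, (Matrix.of fun r j => f r (z j)).det ≠ 0 := by
  let e := Fintype.equivFin ι
  obtain ⟨z, hz⟩ := exists_det_ne_zero_of_linearIndependent_fin (hf.comp e.symm e.symm.injective)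
  refine ⟨z ∘ e, ?_⟩
  rw [← Matrix.det_reindex_self e]
  convert hz using 2
  ext r j
  simp

namespace MvPolynomial

theorem eval_partialSum_X {σ R : Type*} [CommRing R] {n : ℕ}
    (g : σ → Fin (n + 1) → R) (i : σ) (k : Fin (n + 1)) :
    eval (fun q : σ × Fin n => g q.1 q.2.succ - g q.1 q.2.castSucc)
      (Fin.partialSum (fun l => X (i, l)) k) = g i k - g i 0 := by
  simpa [map_partialSum, Function.comp_def] using Fin.partialSum_sub_eq (g i) k

theorem det_monomialMatrix_partialSum_ne_zero {ι σ K : Type*} [Fintype ι]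
    [DecidableEq ι] [Fintype σ] [Field K] [Infinite K] {κ : ι → σ → ℕ}
    (hκ : Function.Injective κ) {n : ℕ} {τ : ι → Fin n} (hτ : Function.Injective τ) :
    (monomialMatrix κ fun j i =>
      Fin.partialSum (fun l => (X (i, l) : MvPolynomial (σ × Fin n) K)) (τ j).succ).det ≠ 0 := by
  obtain ⟨z, hz⟩ :=
    exists_det_ne_zero_of_linearIndependent (linearIndependent_monomial_functions (K := K) hκ)
  let g : σ → Fin (n + 1) → K := fun i =>
    Function.extend (fun j => (τ j).succ) (fun j => z j i) 0
  have hg : ∀ i j, g i (τ j).succ = z j i := fun i j =>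
    ((Fin.succ_injective n).comp hτ).extend_apply _ _ j
  have hg0 : ∀ i, g i 0 = 0 := fun i =>
    Function.extend_apply' _ _ _ fun ⟨j, hj⟩ => Fin.succ_ne_zero _ hj
  intro h
  have := congrArg (eval fun q : σ × Fin n => g q.1 q.2.succ - g q.1 q.2.castSucc) h
  rw [map_zero, RingHom.map_det_monomialMatrix] at this
  simp only [eval_partialSum_X, hg, hg0, sub_zero] at this
  exact hz this

theorem ae_pi_fin_eval_ne_zero : ∀ {n : ℕ} (μ : Fin n → Measure ℝ) [∀ i, SigmaFinite (μ i)]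
    [∀ i, NullSingletonClass (μ i)] {p : MvPolynomial (Fin n) ℝ}, p ≠ 0 →
    ∀ᵐ x ∂Measure.pi μ, eval x p ≠ 0
  | 0, μ, _, _, p, hp => by
    obtain ⟨a, rfl⟩ := C_surjective (Fin 0) p
    exact .of_forall fun x => by simpa using hp
  | n + 1, μ, _, _, p, hp => by
    set q := finSuccEquiv ℝ n p
    have hlead : q.leadingCoeff ≠ 0 :=
      Polynomial.leadingCoeff_ne_zero.mpr ((finSuccEquiv ℝ n).map_ne_zero_iff.mpr hp)
    have h_tail : ∀ᵐ y ∂Measure.pi (fun j : Fin n => μ j.succ),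
        ∀ᵐ x ∂μ 0, Polynomial.eval x (q.map (eval y)) ≠ 0 := by
      filter_upwards [ae_pi_fin_eval_ne_zero (fun j : Fin n => μ j.succ) hlead] with y hy
      have hy' : q.map (eval y) ≠ 0 := fun h =>
        hy (by simpa using congrArg (·.coeff q.natDegree) h)
      exact (Polynomial.finite_setOfPred_isRoot hy').countable.ae_notMem _
    have hmeas :
        MeasurableSet {z : ℝ × (Fin n → ℝ) | Polynomial.eval z.1 (q.map (eval z.2)) ≠ 0} := by
      have : {z : ℝ × (Fin n → ℝ) | Polynomial.eval z.1 (q.map (eval z.2)) ≠ 0} =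
          {z | eval (Fin.cons z.1 z.2 : Fin (n + 1) → ℝ) p ≠ 0} := by
        ext; simp [q, eval_eq_eval_mv_eval']
      rw [this]
      exact (measurableSet_singleton 0).compl.preimage
        ((continuous_eval p).measurable.comp (by fun_prop))
    have := (measurePreserving_piFinSuccAbove μ 0).quasiMeasurePreserving.ae
      ((Measure.ae_prod_iff_ae_ae hmeas).2 ((Measure.ae_ae_comm hmeas).2 h_tail))
    filter_upwards [this] with x hx
    rwa [← Fin.cons_self_tail x, eval_eq_eval_mv_eval']

theorem ae_pi_eval_ne_zero {ι : Type*} [Fintype ι] (μ : ι → Measure ℝ) [∀ i, SigmaFinite (μ i)]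
    [∀ i, NullSingletonClass (μ i)] {p : MvPolynomial ι ℝ} (hp : p ≠ 0) :
    ∀ᵐ x ∂Measure.pi μ, eval x p ≠ 0 := by
  let e := Fintype.equivFin ι
  have hp' : rename e p ≠ 0 := by simpa using (rename_injective _ e.injective).ne hp
  have := (measurePreserving_piCongrLeft μ e.symm).symm.quasiMeasurePreserving.ae
    (ae_pi_fin_eval_ne_zero (fun j => μ (e.symm j)) hp')
  filter_upwards [this] with x hx
  simpa [eval_rename, MeasurableEquiv.piCongrLeft, Equiv.piCongrLeft, Function.comp_def] using hx

end MvPolynomial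

theorem ProbabilityTheory.iIndepFun.ae_eval_ne_zero {Ω ι : Type*} [MeasurableSpace Ω]
    {P : Measure Ω} [IsProbabilityMeasure P] [Fintype ι] {X : ι → Ω → ℝ}
    (hX : ∀ i, Measurable (X i)) (hind : iIndepFun X P)
    [∀ i, NullSingletonClass (P.map (X i))] {p : MvPolynomial ι ℝ} (hp : p ≠ 0) :
    ∀ᵐ ω ∂P, MvPolynomial.eval (fun i => X i ω) p ≠ 0 := by
  have hlaw := (iIndepFun_iff_map_fun_eq_pi_map fun i => (hX i).aemeasurable).mp hind
  refine ae_of_ae_map (p := fun x => MvPolynomial.eval x p ≠ 0)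
    (measurable_pi_lambda _ hX).aemeasurable ?_
  rw [hlaw]
  exact MvPolynomial.ae_pi_eval_ne_zero _ hp

namespace IsStdBrownianMotion

variable {Ω : Type*} [MeasurableSpace Ω] {P : Measure Ω} {d : ℕ} {W : Fin d → ℝ → Ω → ℝ}

theorem nullSingletonClass_map_sub (hW : IsStdBrownianMotion P W) (i : Fin d) {s t : ℝ}
    (hs : 0 ≤ s) (hst : s < t) : NullSingletonClass (P.map fun ω => W i t ω - W i s ω) := by
  rw [hW.gaussian_incr i s t hs hst.le]
  exact nullSingletonClass_gaussianReal (by simpa using hst)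

theorem ae_eval_increments_ne_zero [IsProbabilityMeasure P] (hW : IsStdBrownianMotion P W)
    {n : ℕ} {t : ℕ → ℝ} (ht : StrictMono t) (ht0 : 0 ≤ t 0)
    {p : MvPolynomial (Fin d × Fin n) ℝ} (hp : p ≠ 0) :
    ∀ᵐ ω ∂P, MvPolynomial.eval (fun q : Fin d × Fin n =>
      W q.1 (t (q.2 + 1)) ω - W q.1 (t q.2) ω) p ≠ 0 := by
  have ht_nonneg : ∀ j, 0 ≤ t j := fun j => ht0.trans (ht.monotone j.zero_le)
  have := fun q : Fin d × Fin n =>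
    hW.nullSingletonClass_map_sub q.1 (ht_nonneg q.2) (ht (Nat.lt_succ_self q.2))
  exact (hW.indep_incr n t ht.monotone ht_nonneg).ae_eval_ne_zero
    (fun q => (hW.measurable _ _).sub (hW.measurable _ _)) hp

theorem ae_exists_det_monomialMatrix_ne_zero [IsProbabilityMeasure P]
    (hW : IsStdBrownianMotion P W) {ι : Type*} [Fintype ι] [DecidableEq ι] {κ : ι → Fin d → ℕ}
    (hκ : Function.Injective κ) :
    ∀ᵐ ω ∂P, ∃ s : ι → ℝ, (∀ j, s j ∈ Set.Icc 0 1) ∧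
      (monomialMatrix κ fun j i => W i (s j) ω).det ≠ 0 := by
  let e := Fintype.equivFin ι
  let t : ℕ → ℝ := fun l => l / (Fintype.card ι + 1)
  have ht : StrictMono t := fun a b hab => by simp only [t]; gcongr
  filter_upwards [hW.ae_eval_increments_ne_zero ht (by simp [t])
      (MvPolynomial.det_monomialMatrix_partialSum_ne_zero hκ e.injective),
    ae_all_iff.2 hW.init] with ω hω hω0
  refine ⟨fun j => t (e j + 1), fun j => ⟨by positivity, ?_⟩, ?_⟩
  · have := (e j).isLt
    rw [div_le_one (by positivity)]
    norm_cast
    omega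
  · let g : Fin d → Fin (Fintype.card ι + 1) → ℝ := fun i l => W i (t l) ω
    -- `hω`, restated so that `eval_partialSum_X` applies syntactically
    have hgrid : MvPolynomial.eval
        (fun q : Fin d × Fin (Fintype.card ι) => g q.1 q.2.succ - g q.1 q.2.castSucc)
        (monomialMatrix κ fun j i =>
          Fin.partialSum (fun l => MvPolynomial.X (i, l)) (e j).succ).det ≠ 0 := hω
    rw [RingHom.map_det_monomialMatrix] at hgrid
    simp only [MvPolynomial.eval_partialSum_X] at hgrid
    simpa [g, hω0, t] using hgrid

end IsStdBrownianMotion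

/-- **Almost sure linear independence of Wiener monomials.** Let `W` be a standard
`d`-dimensional Brownian motion on `[0,1]` and fix `m`. The (distinct) Wiener monomials of
degree at most `m` are indexed by exponent vectors `k : Fin d → Fin (m+1)` with
`∑ i, k i ≤ m`, the monomial being `W_k(t) = ∏ i, (W i t) ^ (k i)` (with `W_0 = 1`).
Almost surely, these monomials are linearly independent as functions on `[0,1]`: for every
family of real coefficients `c`, if `∑_k c_k W_k(t) = 0` for all `t ∈ [0,1]`, then all
coefficients vanish. -/
theorem wiener_monomials_linearIndependent
    {Ω : Type*} [MeasurableSpace Ω] (P : Measure Ω) [IsProbabilityMeasure P]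
    (d m : ℕ) (W : Fin d → ℝ → Ω → ℝ) (hW : IsStdBrownianMotion P W) :
    ∀ᵐ ω ∂P, ∀ c : (Fin d → Fin (m + 1)) → ℝ,
      (∀ t ∈ Set.Icc (0 : ℝ) 1,
        ∑ k ∈ Finset.univ.filter (fun k : Fin d → Fin (m + 1) => ∑ i, (k i : ℕ) ≤ m),
          c k * ∏ i, (W i t ω) ^ (k i : ℕ) = 0) →
      ∀ k ∈ Finset.univ.filter (fun k : Fin d → Fin (m + 1) => ∑ i, (k i : ℕ) ≤ m),
        c k = 0 := by
  classical
  set S := Finset.univ.filter (fun k : Fin d → Fin (m + 1) => ∑ i, (k i : ℕ) ≤ m)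
  let κ : S → Fin d → ℕ := fun k i => k.1 i
  have hκ : Function.Injective κ :=
    fun k k' h => Subtype.ext (funext fun i => Fin.ext (congrFun h i))
  filter_upwards [hW.ae_exists_det_monomialMatrix_ne_zero hκ] with ω ⟨s, hs, hdet⟩ c hc k hk
  have hv : Matrix.vecMul (fun k : S => c k) (monomialMatrix κ fun j i => W i (s j) ω) = 0 :=
    funext fun j => by
      simp only [Matrix.vecMul, dotProduct, monomialMatrix, Matrix.of_apply, κ, Pi.zero_apply]
      rw [Finset.sum_coe_sort S fun k => c k * ∏ i, W i (s j) ω ^ (k i : ℕ)]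
      exact hc (s j) (hs j)
  exact congrFun (Matrix.eq_zero_of_vecMul_eq_zero hdet hv) ⟨k, hk⟩
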